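/- Let α > −1/2 and fix n ∈ ℕ and x ∈ ℝ. Then lim_{b→∞} b^{−n/2}·Ŝ_n(√b·x; α+1/2, b) = H_n(x;α), where the limit is over real b → +∞, Ŝ_n are the symmetric Bannai–Ito polynomials and H_n(x;α) are the generalized Hermite polynomials. -/

import Mathlib

open Polynomial Finset Complex Filter

/-- The Pochhammer symbol `(a)ₖ = a(a+1)⋯(a+k-1)` for complex `a`. -/
noncomputable def pochC (a : ℂ) (k : ℕ) : ℂ := (ascPochhammer ℂ k).eval a

/-- The Pochhammer symbol `(a)ₖ = a(a+1)⋯(a+k-1)` for real `a`. -/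
noncomputable def pochR (a : ℝ) (k : ℕ) : ℝ := (ascPochhammer ℝ k).eval a

/-- The symmetric Bannai–Ito polynomials `Ŝₙ(x;a,b)`, given by their
continuous-dual-Hahn-type terminating ₃F₂ hypergeometric expressions. -/
noncomputable def symBI (a b : ℂ) (n : ℕ) : Polynomial ℂ :=
  let m : ℕ := n / 2
  if Even n then
    C ((-1 : ℂ) ^ m * pochC a m * pochC b m) *
      ∑ k ∈ range (m + 1),
        C (pochC (-(m : ℂ)) k / (pochC a k * pochC b k * (k.factorial : ℂ))) *
          ∏ j ∈ range k, (C ((j : ℂ) ^ 2) + X ^ 2)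
  else
    C ((-1 : ℂ) ^ m * pochC (1 + a) m * pochC (1 + b) m) * X *
      ∑ k ∈ range (m + 1),
        C (pochC (-(m : ℂ)) k / (pochC (1 + a) k * pochC (1 + b) k * (k.factorial : ℂ))) *
          ∏ j ∈ Icc 1 k, (C ((j : ℂ) ^ 2) + X ^ 2)

/-- The generalized Hermite polynomials `Hₙ(x;α)`. -/
noncomputable def genHermite (α : ℝ) (n : ℕ) : Polynomial ℝ :=
  let m : ℕ := n / 2
  if Even n then
    C ((-1 : ℝ) ^ m * pochR (α + 1 / 2) m) *
      ∑ k ∈ range (m + 1),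
        C (pochR (-(m : ℝ)) k / (pochR (α + 1 / 2) k * (k.factorial : ℝ))) * X ^ (2 * k)
  else
    C ((-1 : ℝ) ^ m * pochR (α + 3 / 2) m) * X *
      ∑ k ∈ range (m + 1),
        C (pochR (-(m : ℝ)) k / (pochR (α + 3 / 2) k * (k.factorial : ℝ))) * X ^ (2 * k)

open Topology

/-! Up to the parity factor (`1` or `x`), `b^{-n/2} Ŝ_n(√b x; a, b)` and `H_n(x; α)` are the same
finite sum over `k ≤ m = ⌊n/2⌋` with coefficients `(-1)^m (c)_m (-m)_k / ((c)_k k!)`, except that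
`x^{2k}` is replaced by `(s+b)_m / b^m · ∏_{i<k} ((s+i)^2 + b x^2) / (s+b+i)`, `s ∈ {0, 1}`.
Each of the finitely many factors of this product tends to `1` or to `x^2` as `b → ∞`. -/

lemma pochC_eq_prod (a : ℂ) (k : ℕ) : pochC a k = ∏ i ∈ range k, (a + i) := by
  induction k with
  | zero => simp [pochC]
  | succ k ih =>
    rw [pochC, ascPochhammer_succ_right, eval_mul, ← pochC, ih, prod_range_succ]
    simp

lemma ofReal_pochR (a : ℝ) (k : ℕ) : ((pochR a k : ℝ) : ℂ) = pochC a k := by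
  rw [pochR, pochC, ← ascPochhammer_map (algebraMap ℝ ℂ), eval_map_algebraMap]
  exact (aeval_algebraMap_apply_eq_algebraMap_eval a _).symm

lemma tendsto_add_mul_div_add (u v w : ℂ) :
    Tendsto (fun b : ℝ => (u + b * w) / (v + b)) atTop (𝓝 w) := by
  have hinv : Tendsto (fun b : ℝ => (b : ℂ)⁻¹) atTop (𝓝 0) := by
    simpa using tendsto_ofReal_iff.mpr tendsto_inv_atTop_zero
  have h := ((hinv.const_mul u).add_const w).div ((hinv.const_mul v).add_const 1) (by simp)
  simp only [mul_zero, zero_add, div_one] at h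
  refine h.congr' ?_
  filter_upwards [eventually_ne_atTop 0] with b hb
  have hb0 : (b : ℂ) ≠ 0 := ofReal_ne_zero.mpr hb
  change (u * (b : ℂ)⁻¹ + w) / (v * (b : ℂ)⁻¹ + 1) = _
  rw [← mul_div_mul_right _ (v * (b : ℂ)⁻¹ + 1) hb0]
  congr 1 <;> field_simp

noncomputable def hermiteCoeff (c : ℂ) (m k : ℕ) : ℂ :=
  (-1) ^ m * pochC c m * (pochC (-(m : ℂ)) k / (pochC c k * (k.factorial : ℂ)))

noncomputable def genHermiteSum (c y : ℂ) (m : ℕ) : ℂ :=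
  ∑ k ∈ range (m + 1), hermiteCoeff c m k * y ^ k

/-- `Ŝ_{2m}(z; c, b)` for `s = 0`, and `Ŝ_{2m+1}(z; c - 1, b) / z` for `s = 1`, as functions of
`w = z ^ 2`. -/
noncomputable def symBISum (c s b w : ℂ) (m : ℕ) : ℂ :=
  ∑ k ∈ range (m + 1), hermiteCoeff c m k * (pochC (s + b) m / pochC (s + b) k) *
    ∏ i ∈ range k, ((s + i) ^ 2 + w)

lemma genHermite_eval_two_mul (α x : ℝ) (m : ℕ) :
    (((genHermite α (2 * m)).eval x : ℝ) : ℂ) =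
      genHermiteSum ((α : ℂ) + 1 / 2) ((x : ℂ) ^ 2) m := by
  simp only [genHermite, if_pos (even_two_mul m), Nat.mul_div_cancel_left m two_pos, eval_mul,
    eval_C, eval_finsetSum, eval_pow, eval_X, mul_sum, genHermiteSum, hermiteCoeff]
  push_cast [ofReal_pochR, pow_mul]
  exact sum_congr rfl fun k _ => by ring

lemma genHermite_eval_two_mul_add_one (α x : ℝ) (m : ℕ) :
    (((genHermite α (2 * m + 1)).eval x : ℝ) : ℂ) =
      x * genHermiteSum ((α : ℂ) + 3 / 2) ((x : ℂ) ^ 2) m := by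
  have hm : (2 * m + 1) / 2 = m := by omega
  simp only [genHermite, if_neg (Nat.not_even_two_mul_add_one m), hm, eval_mul,
    eval_C, eval_finsetSum, eval_pow, eval_X, mul_sum, genHermiteSum, hermiteCoeff]
  push_cast [ofReal_pochR, pow_mul]
  exact sum_congr rfl fun k _ => by ring

lemma symBI_eval_two_mul (a b z : ℂ) (m : ℕ) :
    (symBI a b (2 * m)).eval z = symBISum a 0 b (z ^ 2) m := by
  simp only [symBI, if_pos (even_two_mul m), Nat.mul_div_cancel_left m two_pos, eval_mul,
    eval_C, eval_finsetSum, eval_prod, eval_add, eval_pow, eval_X, mul_sum, symBISum,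
    hermiteCoeff, zero_add]
  exact sum_congr rfl fun k _ => by ring

lemma symBI_eval_two_mul_add_one (a b z : ℂ) (m : ℕ) :
    (symBI a b (2 * m + 1)).eval z = z * symBISum (1 + a) 1 b (z ^ 2) m := by
  have hm : (2 * m + 1) / 2 = m := by omega
  have hIcc (k : ℕ) :
      ∏ j ∈ Icc 1 k, ((j : ℂ) ^ 2 + z ^ 2) = ∏ i ∈ range k, ((1 + i) ^ 2 + z ^ 2) := by
    rw [← Finset.Ico_add_one_right_eq_Icc, prod_Ico_eq_prod_range]
    exact prod_congr (by simp) fun i _ => by push_cast; ring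
  simp only [symBI, if_neg (Nat.not_even_two_mul_add_one m), hm, eval_mul,
    eval_C, eval_finsetSum, eval_prod, eval_add, eval_pow, eval_X, mul_sum, symBISum,
    hermiteCoeff, hIcc]
  exact sum_congr rfl fun k _ => by ring

theorem tendsto_symBISum (c s y : ℂ) (m : ℕ) :
    Tendsto (fun b : ℝ => ((b : ℂ) ^ m)⁻¹ * symBISum c s b (b * y) m) atTop
      (𝓝 (genHermiteSum c y m)) := by
  have hsplit (b : ℝ) : ((b : ℂ) ^ m)⁻¹ * symBISum c s b (b * y) m =
      ∑ k ∈ range (m + 1), hermiteCoeff c m k * ((∏ i ∈ range m, (s + b + i) / b) *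
        ∏ i ∈ range k, ((s + i) ^ 2 + b * y) / (s + b + i)) := by
    simp only [symBISum, pochC_eq_prod, prod_div_distrib, prod_const, card_range, mul_sum]
    exact sum_congr rfl fun k _ => by ring
  have hpoch (i : ℕ) : Tendsto (fun b : ℝ => (s + b + i) / b) atTop (𝓝 1) :=
    (tendsto_add_mul_div_add (s + i) 0 1).congr fun b => by ring
  have hfactor (i : ℕ) : Tendsto (fun b : ℝ => ((s + i) ^ 2 + b * y) / (s + b + i)) atTop (𝓝 y) :=
    (tendsto_add_mul_div_add ((s + i) ^ 2) (s + i) y).congr fun b => by ring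
  have h := tendsto_finsetSum (range (m + 1)) fun k _ =>
    tendsto_const_nhds (x := hermiteCoeff c m k) |>.mul ((tendsto_finsetProd (range m) fun i _ => hpoch i).mul
      (tendsto_finsetProd (range k) fun i _ => hfactor i))
  simp only [prod_const_one, one_mul, prod_const, card_range] at h
  simpa only [hsplit, genHermiteSum] using h

lemma ofReal_cpow_neg_natCast_div_two {b : ℝ} (hb : 0 ≤ b) (n : ℕ) :
    (b : ℂ) ^ (-(n : ℂ) / 2) = (((√b : ℝ) : ℂ) ^ n)⁻¹ := by
  have h : b ^ (-(n : ℝ) / 2) = (√b ^ n)⁻¹ := by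
    rw [Real.sqrt_eq_rpow, ← Real.rpow_natCast, ← Real.rpow_mul hb, ← Real.rpow_neg hb]
    ring_nf
  rw [← ofReal_pow, ← ofReal_inv, ← h, ofReal_cpow hb]
  norm_num

lemma ofReal_sqrt_sq {b : ℝ} (hb : 0 ≤ b) : ((√b : ℝ) : ℂ) ^ 2 = b := by
  rw [← ofReal_pow, Real.sq_sqrt hb]

lemma cpow_mul_symBI_eval_two_mul {b : ℝ} (hb : 0 ≤ b) (a : ℂ) (x : ℝ) (m : ℕ) :
    (b : ℂ) ^ (-((2 * m : ℕ) : ℂ) / 2) * (symBI a b (2 * m)).eval ((√b * x : ℝ) : ℂ) =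
      ((b : ℂ) ^ m)⁻¹ * symBISum a 0 b (b * (x : ℂ) ^ 2) m := by
  rw [ofReal_cpow_neg_natCast_div_two hb, symBI_eval_two_mul, pow_mul, ofReal_sqrt_sq hb]
  push_cast
  rw [mul_pow, ofReal_sqrt_sq hb]

lemma cpow_mul_symBI_eval_two_mul_add_one {b : ℝ} (hb : 0 < b) (a : ℂ) (x : ℝ) (m : ℕ) :
    (b : ℂ) ^ (-((2 * m + 1 : ℕ) : ℂ) / 2) * (symBI a b (2 * m + 1)).eval ((√b * x : ℝ) : ℂ) =
      x * (((b : ℂ) ^ m)⁻¹ * symBISum (1 + a) 1 b (b * (x : ℂ) ^ 2) m) := by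
  have hsqrt : ((√b : ℝ) : ℂ) ≠ 0 := ofReal_ne_zero.mpr (Real.sqrt_pos.mpr hb).ne'
  rw [ofReal_cpow_neg_natCast_div_two hb.le, symBI_eval_two_mul_add_one, pow_succ, pow_mul,
    ofReal_sqrt_sq hb.le]
  push_cast
  rw [mul_pow, ofReal_sqrt_sq hb.le]
  field_simp

theorem symBannaiIto_to_genHermite_limit (α : ℝ) (n : ℕ) (x : ℝ) :
    Tendsto (fun b : ℝ =>
        (b : ℂ) ^ (-(n : ℂ) / 2) *
          (symBI ((α : ℂ) + 1 / 2) (b : ℂ) n).eval ((Real.sqrt b * x : ℝ) : ℂ))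
      atTop (nhds (((genHermite α n).eval x : ℝ) : ℂ)) := by
  obtain ⟨m, rfl | rfl⟩ := Nat.even_or_odd' n
  · rw [genHermite_eval_two_mul]
    refine (tendsto_symBISum _ 0 _ m).congr' ?_
    filter_upwards [eventually_ge_atTop 0] with b hb
    rw [cpow_mul_symBI_eval_two_mul hb]
  · rw [genHermite_eval_two_mul_add_one, show (α : ℂ) + 3 / 2 = 1 + ((α : ℂ) + 1 / 2) by ring]
    refine ((tendsto_symBISum _ 1 _ m).const_mul (x : ℂ)).congr' ?_
    filter_upwards [eventually_gt_atTop 0] with b hb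
    rw [cpow_mul_symBI_eval_two_mul_add_one hb]
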